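/- Let R be a left Artinian left quasi-duo ring and M a cyclic left R-module. Then top(M) = M/Rad(M) is square-free. -/

import Mathlib

open Submodule

/-- The radical of a module: intersection of all maximal submodules. -/
def moduleRad (R M : Type*) [Ring R] [AddCommGroup M] [Module R M] : Submodule R M :=
  sInf {N : Submodule R M | IsCoatom N}

/-- The socle of a module: sum of all simple submodules. -/
def moduleSoc (R M : Type*) [Ring R] [AddCommGroup M] [Module R M] : Submodule R M :=
  sSup {N : Submodule R M | IsAtom N}

/-- A submodule is superfluous (small) if it is redundant in any sup reaching the top. -/
def IsSuperfluous {R M : Type*} [Ring R] [AddCommGroup M] [Module R M]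
    (N : Submodule R M) : Prop :=
  ∀ L : Submodule R M, N ⊔ L = ⊤ → L = ⊤

/-- A module is cyclic if generated by one element. -/
def IsCyclicModule (R M : Type*) [Ring R] [AddCommGroup M] [Module R M] : Prop :=
  ∃ m : M, Submodule.span R {m} = ⊤

/-- A module has cyclic top if `M / rad M` is cyclic. -/
def HasCyclicTop (R M : Type*) [Ring R] [AddCommGroup M] [Module R M] : Prop :=
  IsCyclicModule R (M ⧸ moduleRad R M)

/-- Square-free: no direct sum of two nonzero isomorphic submodules. -/
def IsSquareFreeModule (R M : Type*) [Ring R] [AddCommGroup M] [Module R M] : Prop :=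
  ∀ A B : Submodule R M, A ⊓ B = ⊥ → Nonempty (A ≃ₗ[R] B) → A = ⊥

/-- The Jacobson radical of a ring. -/
def jacobsonRadical (R : Type*) [Ring R] : Ideal R := (⊥ : Ideal R).jacobson

/-- A semiperfect ring: `R/J(R)` is semisimple and idempotents lift modulo `J(R)`. -/
def IsSemiperfectRing (R : Type*) [Ring R] : Prop :=
  IsSemisimpleModule R (R ⧸ jacobsonRadical R) ∧
  ∀ a : R, a * a - a ∈ jacobsonRadical R →
    ∃ e : R, IsIdempotentElem e ∧ e - a ∈ jacobsonRadical R

/-- A local module: a (unique) maximal submodule containing every proper submodule. -/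
def IsLocalModule (R M : Type*) [Ring R] [AddCommGroup M] [Module R M] : Prop :=
  ∃ N : Submodule R M, IsCoatom N ∧ ∀ L : Submodule R M, L ≠ ⊤ → L ≤ N

/-- An indecomposable module: nonzero and not the direct sum of two nonzero submodules. -/
def IsIndecomposableModule (R M : Type*) [Ring R] [AddCommGroup M] [Module R M] : Prop :=
  Nontrivial M ∧ ∀ A B : Submodule R M, A ⊓ B = ⊥ → A ⊔ B = ⊤ → A = ⊥ ∨ B = ⊥

/-- A uniserial module: submodules linearly ordered by inclusion. -/
def IsUniserialModule (R M : Type*) [Ring R] [AddCommGroup M] [Module R M] : Prop :=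
  ∀ A B : Submodule R M, A ≤ B ∨ B ≤ A

/-- Left T-nilpotence of a set. -/
def IsLeftTNilpotent {R : Type*} [Ring R] (S : Set R) : Prop :=
  ∀ x : ℕ → R, (∀ n, x n ∈ S) → ∃ n : ℕ, ((List.range (n + 1)).map x).prod = 0

/-- A left perfect ring: `R/J` semisimple and `J` left T-nilpotent. -/
def IsLeftPerfectRing (R : Type*) [Ring R] : Prop :=
  IsSemisimpleModule R (R ⧸ jacobsonRadical R) ∧
  IsLeftTNilpotent (jacobsonRadical R : Set R)

/-- Composition length of a module, as the Krull dimension of its submodule lattice. -/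
noncomputable def modLength (R M : Type*) [Ring R] [AddCommGroup M] [Module R M] :
    WithBot ℕ∞ :=
  Order.krullDim (Submodule R M)

/-- A local idempotent: the corner ring `eRe` is a local ring. -/
def IsLocalIdempotent {R : Type*} [Ring R] (e : R) : Prop :=
  IsIdempotentElem e ∧ e ≠ 0 ∧
  ∀ x : R, x = e * x * e →
    (∃ y : R, y = e * y * e ∧ x * y = e ∧ y * x = e) ∨
    (∃ y : R, y = e * y * e ∧ (e - x) * y = e ∧ y * (e - x) = e)

/-- A primitive idempotent. -/
def IsPrimitiveIdempotent {R : Type*} [Ring R] (e : R) : Prop :=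
  IsIdempotentElem e ∧ e ≠ 0 ∧
  ∀ a b : R, IsIdempotentElem a → IsIdempotentElem b →
    a * b = 0 → b * a = 0 → a + b = e → a = 0 ∨ b = 0

/-- An essential submodule: meets every nonzero submodule nontrivially. -/
def IsEssentialSubmodule {R M : Type*} [Ring R] [AddCommGroup M] [Module R M]
    (N : Submodule R M) : Prop :=
  ∀ L : Submodule R M, N ⊓ L = ⊥ → L = ⊥

/-! Write `T = M / Rad M`, a cyclic module generated by some `g`, with `Rad T = 0`. Let `m` be a
maximal left ideal, hence two-sided. If `m t = 0` and `N` is a maximal submodule of `T` whose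
conductor `(N : g)` is not `m`, then the ideal `{a | a t ∈ N}` contains `m` and, since `(N : g)` is
two-sided, also `(N : g)`; as `m + (N : g) = R`, we get `t ∈ N`. Because `Rad T = 0` this shows
that `m T` meets the elements killed by `m` trivially, and then that those elements form a cyclic
module generated by any nonzero one of them.

Given `A ≅ B` with `A ∩ B = 0` and `A ≠ 0`, the Artinian hypothesis provides `s ≠ 0` in `A`
spanning a simple submodule; its annihilator `m` is a maximal left ideal that also kills the image
`s'` of `s` in `B`. Hence `s' ∈ R s ⊆ A`, so `s' = 0`, a contradiction. -/

def IsLeftQuasiDuo (R : Type*) [Ring R] : Prop :=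
  ∀ P : Ideal R, IsCoatom P → P.IsTwoSided

open LinearMap

section QuasiDuo

variable {R T : Type*} [Ring R] [AddCommGroup T] [Module R T]

theorem ker_toSpanSingleton_le_ker_toSpanSingleton_apply {N : Type*} [AddCommGroup N]
    [Module R N] (f : T →ₗ[R] N) (x : T) :
    ker (toSpanSingleton R T x) ≤ ker (toSpanSingleton R N (f x)) := by
  rw [← comp_toSpanSingleton]
  exact ker_le_ker_comp _ _

variable (hR : IsLeftQuasiDuo R) {g : T} (hg : span R {g} = ⊤) {m : Ideal R} (hm : IsCoatom m)
include hR hg hm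

theorem mem_of_le_ker_toSpanSingleton {N : Submodule R T} (hN : IsCoatom N)
    (hne : N.comap (toSpanSingleton R T g) ≠ m) {t : T} (ht : m ≤ ker (toSpanSingleton R T t)) :
    t ∈ N := by
  set P := N.comap (toSpanSingleton R T g)
  have hsurj : Function.Surjective (toSpanSingleton R T g) := by
    rw [← range_eq_top, range_toSpanSingleton, hg]
  have hP : IsCoatom P := (isCoatom_comap_iff hsurj).mpr hN
  have := hR P hP
  obtain ⟨r, rfl⟩ := mem_span_singleton.mp (hg ▸ mem_top : t ∈ span R {g})
  have hmP : m ⊔ P ≤ N.comap (toSpanSingleton R T (r • g)) := by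
    refine sup_le (ht.trans (ker_le_comap _)) fun y hy => ?_
    simpa [P, mul_smul] using Ideal.mul_mem_right r P hy
  simpa using hmP ((hm.sup_eq_top_of_ne hP hne.symm).symm ▸ mem_top : (1 : R) ∈ m ⊔ P)

theorem smul_eq_zero_of_mem_of_le_ker (hrad : Module.jacobson R T = ⊥) {r : R} (hr : r ∈ m)
    (ht : m ≤ ker (toSpanSingleton R T (r • g))) : r • g = 0 := by
  rw [← mem_bot R, ← hrad, Module.jacobson, mem_sInf]
  intro N hN
  by_cases hne : N.comap (toSpanSingleton R T g) = m
  · simpa [← hne] using hr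
  · exact mem_of_le_ker_toSpanSingleton hR hg hm hN hne ht

theorem mem_span_singleton_of_le_ker (hrad : Module.jacobson R T = ⊥) {s s' : T} (hs0 : s ≠ 0)
    (hs : m ≤ ker (toSpanSingleton R T s)) (hs' : m ≤ ker (toSpanSingleton R T s')) :
    s' ∈ span R {s} := by
  have := hR m hm
  obtain ⟨a, rfl⟩ := mem_span_singleton.mp (hg ▸ mem_top : s ∈ span R {g})
  obtain ⟨b, rfl⟩ := mem_span_singleton.mp (hg ▸ mem_top : s' ∈ span R {g})
  have ha : a ∉ m := fun ha => hs0 (smul_eq_zero_of_mem_of_le_ker hR hg hm hrad ha hs)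
  obtain ⟨y, i, hi, hyi⟩ := (Ideal.isMaximal_def.mpr hm).exists_inv ha
  have hb : b • g = (b * y) • a • g + (b * i) • g := by
    rw [← mul_smul, ← add_smul, mul_assoc, ← mul_add, hyi, mul_one]
  have hbi : (b * i) • g = 0 := by
    refine smul_eq_zero_of_mem_of_le_ker hR hg hm hrad (m.mul_mem_left b hi) fun x hx => ?_
    have h1 : x • b • g = 0 := by simpa using hs' hx
    have h2 : (x * (b * y)) • a • g = 0 := by simpa using hs (Ideal.mul_mem_right _ m hx)
    rw [mem_ker, toSpanSingleton_apply, ← sub_eq_of_eq_add' hb, smul_sub, h1, smul_smul, h2,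
      sub_self]
  rw [hb, hbi, add_zero]
  exact smul_mem _ _ (mem_span_singleton_self _)

end QuasiDuo

universe u

theorem stmt12 {R : Type u} [Ring R] [IsArtinianRing R]
    (hqd : ∀ P : Ideal R, IsCoatom P → ∀ r x : R, x ∈ P → x * r ∈ P)
    {M : Type u} [AddCommGroup M] [Module R M] (hM : IsCyclicModule R M) :
    IsSquareFreeModule R (M ⧸ moduleRad R M) := by
  have hR : IsLeftQuasiDuo R := fun P hP => ⟨fun b ha => hqd P hP b _ ha⟩
  obtain ⟨g, hg⟩ := hM
  have : Module.Finite R M := ⟨⟨{g}, by simpa using hg⟩⟩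
  have hgT : span R {(moduleRad R M).mkQ g} = ⊤ := by
    rw [← Set.image_singleton, ← Submodule.map_span, hg, Submodule.map_top, range_mkQ]
  rintro A B hAB ⟨φ⟩
  by_contra hA
  obtain ⟨S, hS, hSA⟩ := (eq_bot_or_exists_atom_le A).resolve_left hA
  have := isSimpleModule_iff_isAtom.mpr hS
  have := IsSimpleModule.nontrivial R S
  obtain ⟨x, hx⟩ := exists_ne (0 : S)
  set f : S →ₗ[R] M ⧸ moduleRad R M := B.subtype ∘ₗ φ.toLinearMap ∘ₗ inclusion hSA
  have hf : Function.Injective f :=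
    B.injective_subtype.comp (φ.injective.comp (inclusion_injective hSA))
  have hfx := mem_span_singleton_of_le_ker hR hgT
    (IsSimpleModule.ker_toSpanSingleton_isMaximal R hx).1 (Module.jacobson_quotient_jacobson R M)
    (S.subtype_injective.ne hx) (ker_toSpanSingleton_le_ker_toSpanSingleton_apply S.subtype x)
    (ker_toSpanSingleton_le_ker_toSpanSingleton_apply f x)
  have hfxA : f x ∈ A := span_le.mpr (by simpa using hSA x.2) hfx
  have hfx0 : f x = 0 := (mem_bot R).mp (hAB ▸ mem_inf.mpr ⟨hfxA, (φ (inclusion hSA x)).2⟩)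
  exact hx (hf (hfx0.trans (map_zero f).symm))
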